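/- Fix m₂ > 0 and ν > m₂ + 1/2, and define Λ(w) = ∫₀^w ∫₀^∞ h(u,t) du dt for 0 < w < 1, where h(u,t) = K₀ · u^{(m₁+m₂)/2−1} · t^{m₁/2−1} · (1−t)^{m₂/2−1} · (1 + m₁ut/ν)^{−(m₁+ν)/2} · (1 + m₂u(1−t)/ν)^{−(m₂+ν)/2} with m₁ = m₂ + 1/2 and K₀ = (m₁/ν)^{m₁/2}(m₂/ν)^{m₂/2} / (B(m₁/2, ν/2) · B(m₂/2, ν/2)). Then for all 0 < w < 1, A₂* · I(w) ≤ Λ(w) ≤ A₁* · I(w), where I(w) = (1/B((m₂+1/2)/2, m₂/2)) ∫₀^w t^{(m₂+1/2)/2−1}(1−t)^{m₂/2−1} dt is the regularized incomplete Beta function with parameters (m₂+0.5)/2 and m₂/2, and A₁*, A₂* are the constants A₁, A₂ evaluated at m₁ = m₂ + 1/2 and ν₁ = ν₂ = ν. (This makes precise that the limiting distribution Λ of W = Y₁/(Y₁+Y₂) is approximately the Beta distribution with shape parameters (m₂+0.5)/2 and m₂/2.) -/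

import Mathlib

open Real MeasureTheory Set

/-- Beta function `B(a,b) = Γ(a)Γ(b)/Γ(a+b)`. -/
noncomputable def Beta (a b : ℝ) : ℝ := Gamma a * Gamma b / Gamma (a + b)

/-- The normalizing constant `K₀`. -/
noncomputable def K₀ (m₁ m₂ ν₁ ν₂ : ℝ) : ℝ :=
  (m₁ / ν₁) ^ (m₁ / 2) * (m₂ / ν₂) ^ (m₂ / 2) /
    (Beta (m₁ / 2) (ν₁ / 2) * Beta (m₂ / 2) (ν₂ / 2))

/-- The joint density `h(u,t)` of `(U,W)` with common denominator degrees of freedom. -/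
noncomputable def hDens (m₁ m₂ ν : ℝ) (u t : ℝ) : ℝ :=
  K₀ m₁ m₂ ν ν * u ^ ((m₁ + m₂) / 2 - 1) * t ^ (m₁ / 2 - 1) * (1 - t) ^ (m₂ / 2 - 1) *
    (1 + m₁ * u * t / ν) ^ (-(m₁ + ν) / 2) *
    (1 + m₂ * u * (1 - t) / ν) ^ (-(m₂ + ν) / 2)

/-- The constant `A₁`. -/
noncomputable def A₁ (m₁ m₂ ν₁ ν₂ : ℝ) : ℝ :=
  (m₁ * ν₂ / (m₂ * ν₁)) ^ (m₁ / 2) * Beta ((m₁ + m₂) / 2) ((ν₂ - m₁) / 2) *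
    Beta (m₁ / 2) (m₂ / 2) / (Beta (m₁ / 2) (ν₁ / 2) * Beta (m₂ / 2) (ν₂ / 2))

/-- The constant `A₂`. -/
noncomputable def A₂ (m₁ m₂ ν₁ ν₂ : ℝ) : ℝ :=
  2 ^ ((m₁ + m₂) / 2) * (m₂ * ν₁ / (m₁ * ν₂)) ^ (m₂ / 2) *
    Beta ((m₁ + m₂) / 2) ((m₁ - m₂ + 2 * ν₁) / 2) *
    Beta (m₁ / 2) (m₂ / 2) / (Beta (m₁ / 2) (ν₁ / 2) * Beta (m₂ / 2) (ν₂ / 2))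

/-- The regularized incomplete Beta function with parameters `(m₂+0.5)/2` and `m₂/2`. -/
noncomputable def regIncBeta (m₂ : ℝ) (w : ℝ) : ℝ :=
  (1 / Beta ((m₂ + 1 / 2) / 2) (m₂ / 2)) *
    ∫ t in (0 : ℝ)..w, t ^ ((m₂ + 1 / 2) / 2 - 1) * (1 - t) ^ (m₂ / 2 - 1)


/-!
Write `h(u,t) = K₀ t^(m₁/2-1) (1-t)^(m₂/2-1) u^(c-1) P(u,t)` with `c = (m₁+m₂)/2`, where `P` is
the product of the two negative powers. As `m₂ ≤ m₁` and both exponents are nonpositive, `P` is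
squeezed between `(1 + m₁u/(2ν))^(-(m₁+ν))` (by AM-GM) and `(1 + m₂u/ν)^(-(m₂+ν)/2)`, neither of
which depends on `t`. Their `u`-integrals are Beta integrals,
`∫₀^∞ u^(c-1) (1+λu)^(-(c+d)) du = λ^(-c) B(c,d)` (substitute `u = x/(λ(1-x))`), and what is left
in `t` is the incomplete Beta integral; `A₁` and `A₂` are exactly the constants produced this way.
-/
lemma Beta_pos {a b : ℝ} (ha : 0 < a) (hb : 0 < b) : 0 < Beta a b :=
  ProbabilityTheory.beta_pos ha hb

lemma ofReal_rpow_mul_one_sub_rpow {a b x : ℝ} (hx₀ : 0 ≤ x) (hx₁ : x ≤ 1) :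
    (x : ℂ) ^ ((a : ℂ) - 1) * (1 - (x : ℂ)) ^ ((b : ℂ) - 1) =
      ((x ^ (a - 1) * (1 - x) ^ (b - 1) : ℝ) : ℂ) := by
  rw [Complex.ofReal_mul, Complex.ofReal_cpow hx₀, Complex.ofReal_cpow (sub_nonneg.2 hx₁)]
  push_cast
  rfl

lemma integrableOn_rpow_mul_one_sub_rpow {a b : ℝ} (ha : 0 < a) (hb : 0 < b) :
    IntegrableOn (fun x : ℝ => x ^ (a - 1) * (1 - x) ^ (b - 1)) (Ioc 0 1) := by
  have h := Complex.betaIntegral_convergent (u := a) (v := b) (by simpa) (by simpa)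
  rw [intervalIntegrable_iff_integrableOn_Ioc_of_le zero_le_one] at h
  refine (h.congr_fun (fun x hx => ofReal_rpow_mul_one_sub_rpow hx.1.le hx.2)
    measurableSet_Ioc).re

lemma integral_rpow_mul_one_sub_rpow {a b : ℝ} (ha : 0 < a) (hb : 0 < b) :
    ∫ x in Ioc 0 1, x ^ (a - 1) * (1 - x) ^ (b - 1) = Beta a b := by
  rw [show Beta a b = ProbabilityTheory.beta a b from rfl,
    ProbabilityTheory.beta_eq_betaIntegralReal a b ha hb, Complex.betaIntegral,
    intervalIntegral.integral_of_le zero_le_one,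
    setIntegral_congr_fun measurableSet_Ioc
      (fun x hx => ofReal_rpow_mul_one_sub_rpow hx.1.le hx.2), integral_complex_ofReal,
    Complex.ofReal_re]

section Substitution

variable {l : ℝ}

lemma hasDerivAt_div_mul_one_sub (hl : l ≠ 0) {x : ℝ} (hx : x ≠ 1) :
    HasDerivAt (fun x => x / (l * (1 - x))) (1 / (l * (1 - x) ^ 2)) x := by
  have hx : 1 - x ≠ 0 := sub_ne_zero.2 hx.symm
  refine ((hasDerivAt_id' x).div (((hasDerivAt_id' x).const_sub 1).const_mul l)
    (mul_ne_zero hl hx)).congr_deriv ?_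
  field_simp
  ring

lemma injOn_div_mul_one_sub (hl : l ≠ 0) : InjOn (fun x => x / (l * (1 - x))) (Ioo 0 1) := by
  intro x hx y hy hxy
  have hx₁ : 1 - x ≠ 0 := by linarith [hx.2]
  have hy₁ : 1 - y ≠ 0 := by linarith [hy.2]
  field_simp at hxy
  linarith

lemma image_div_mul_one_sub_Ioo (hl : 0 < l) :
    (fun x => x / (l * (1 - x))) '' Ioo 0 1 = Ioi 0 := by
  ext u
  refine ⟨fun ⟨x, hx, hxu⟩ => hxu ▸ div_pos hx.1 (mul_pos hl (by linarith [hx.2])), fun hu => ?_⟩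
  have hu : 0 < l * u := mul_pos hl hu
  refine ⟨l * u / (1 + l * u), ⟨by positivity, (div_lt_one (by positivity)).2 (by linarith)⟩, ?_⟩
  field_simp
  ring

lemma abs_deriv_mul_rpow_mul_one_add_mul_rpow {c d x : ℝ} (hl : 0 < l) (hx : x ∈ Ioo 0 1) :
    |1 / (l * (1 - x) ^ 2)| • ((x / (l * (1 - x))) ^ (c - 1) *
      (1 + l * (x / (l * (1 - x)))) ^ (-(c + d))) =
      l ^ (-c) * (x ^ (c - 1) * (1 - x) ^ (d - 1)) := by
  obtain ⟨hx₀, hx₁⟩ := hx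
  set y := 1 - x
  have hy₀ : 0 < y := by linarith
  have h_one_add : 1 + l * (x / (l * y)) = y⁻¹ := by
    field_simp
    linarith
  have h_pow_l : l ^ (-c) = (l ^ (c - 1) * l)⁻¹ := by
    rw [rpow_neg hl.le, ← rpow_add_one hl.ne', sub_add_cancel]
  have h_pow_y : y ^ (c + d) = y ^ (d - 1) * y ^ (c - 1) * y ^ 2 := by
    rw [← rpow_two, ← rpow_add hy₀, ← rpow_add hy₀]
    ring_nf
  rw [smul_eq_mul, h_one_add, abs_of_pos (by positivity), div_rpow hx₀.le (by positivity),
    mul_rpow hl.le hy₀.le, inv_rpow hy₀.le, ← rpow_neg hy₀.le, neg_neg, h_pow_l, h_pow_y]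
  have : 0 < l ^ (c - 1) := rpow_pos_of_pos hl _
  have : 0 < y ^ (c - 1) := rpow_pos_of_pos hy₀ _
  field_simp

end Substitution

lemma integrableOn_Ioi_rpow_mul_one_add_mul_rpow {c d l : ℝ} (hc : 0 < c) (hd : 0 < d)
    (hl : 0 < l) :
    IntegrableOn (fun u => u ^ (c - 1) * (1 + l * u) ^ (-(c + d))) (Ioi 0) := by
  rw [← image_div_mul_one_sub_Ioo hl, integrableOn_image_iff_integrableOn_abs_deriv_smul
    measurableSet_Ioo (fun x hx => (hasDerivAt_div_mul_one_sub hl.ne' hx.2.ne).hasDerivWithinAt)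
    (injOn_div_mul_one_sub hl.ne')]
  refine IntegrableOn.congr_fun ?_
    (fun x hx => (abs_deriv_mul_rpow_mul_one_add_mul_rpow hl hx).symm) measurableSet_Ioo
  exact ((integrableOn_rpow_mul_one_sub_rpow hc hd).mono_set Ioo_subset_Ioc_self).const_mul _

lemma integral_Ioi_rpow_mul_one_add_mul_rpow {c d l : ℝ} (hc : 0 < c) (hd : 0 < d)
    (hl : 0 < l) :
    ∫ u in Ioi 0, u ^ (c - 1) * (1 + l * u) ^ (-(c + d)) = l ^ (-c) * Beta c d := by
  rw [← image_div_mul_one_sub_Ioo hl, integral_image_eq_integral_abs_deriv_smul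
    measurableSet_Ioo (fun x hx => (hasDerivAt_div_mul_one_sub hl.ne' hx.2.ne).hasDerivWithinAt)
    (injOn_div_mul_one_sub hl.ne'),
    setIntegral_congr_fun measurableSet_Ioo
      (fun x hx => abs_deriv_mul_rpow_mul_one_add_mul_rpow hl hx), integral_const_mul,
    integral_Ioc_eq_integral_Ioo.symm, integral_rpow_mul_one_sub_rpow hc hd]

section Sandwich

variable {α β : Type*} [MeasurableSpace α] [MeasurableSpace β] {μ : Measure α} {ν : Measure β}

lemma integrableOn_of_forall_mem_Icc {f g₁ g₂ : α → ℝ} {s : Set α} (hs : MeasurableSet s)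
    (hf : AEStronglyMeasurable f (μ.restrict s)) (h₁ : IntegrableOn g₁ s μ)
    (h₂ : IntegrableOn g₂ s μ) (h : ∀ x ∈ s, f x ∈ Icc (g₁ x) (g₂ x)) :
    IntegrableOn f s μ :=
  integrable_of_le_of_le hf ((ae_restrict_iff' hs).2 (.of_forall fun x hx => (h x hx).1))
    ((ae_restrict_iff' hs).2 (.of_forall fun x hx => (h x hx).2)) h₁ h₂

lemma setIntegral_mem_Icc_of_forall_mem_Icc {f g₁ g₂ : α → ℝ} {s : Set α} (hs : MeasurableSet s)
    (hf : AEStronglyMeasurable f (μ.restrict s)) (h₁ : IntegrableOn g₁ s μ)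
    (h₂ : IntegrableOn g₂ s μ) (h : ∀ x ∈ s, f x ∈ Icc (g₁ x) (g₂ x)) :
    ∫ x in s, f x ∂μ ∈ Icc (∫ x in s, g₁ x ∂μ) (∫ x in s, g₂ x ∂μ) :=
  have hf := integrableOn_of_forall_mem_Icc hs hf h₁ h₂ h
  ⟨setIntegral_mono_on h₁ hf hs fun x hx => (h x hx).1,
    setIntegral_mono_on hf h₂ hs fun x hx => (h x hx).2⟩

lemma setIntegral_setIntegral_mem_Icc_of_forall_mem_Icc [SFinite ν] {f : α → β → ℝ}
    {D : α → ℝ} {g₁ g₂ : β → ℝ} {s : Set α} {t : Set β} (hs : MeasurableSet s)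
    (ht : MeasurableSet t) (hf : StronglyMeasurable (Function.uncurry f)) (hD : IntegrableOn D s μ)
    (h₁ : IntegrableOn g₁ t ν) (h₂ : IntegrableOn g₂ t ν)
    (h : ∀ x ∈ s, ∀ y ∈ t, f x y ∈ Icc (D x * g₁ y) (D x * g₂ y)) :
    ∫ x in s, ∫ y in t, f x y ∂ν ∂μ ∈
      Icc ((∫ x in s, D x ∂μ) * ∫ y in t, g₁ y ∂ν) ((∫ x in s, D x ∂μ) * ∫ y in t, g₂ y ∂ν) := by
  have h_inner : ∀ x ∈ s, ∫ y in t, f x y ∂ν ∈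
      Icc (D x * ∫ y in t, g₁ y ∂ν) (D x * ∫ y in t, g₂ y ∂ν) := fun x hx => by
    simpa only [integral_const_mul] using
      setIntegral_mem_Icc_of_forall_mem_Icc ht (hf.of_uncurry_left.aestronglyMeasurable)
        (h₁.const_mul (D x)) (h₂.const_mul (D x)) (h x hx)
  simpa only [integral_mul_const] using
    setIntegral_mem_Icc_of_forall_mem_Icc hs hf.integral_prod_right.aestronglyMeasurable
      (hD.mul_const _) (hD.mul_const _) h_inner

end Sandwich

lemma one_add_rpow_mul_one_add_rpow_le {a b s e₁ e₂ : ℝ} (ha : 0 ≤ a) (hb : 0 ≤ b)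
    (hs₀ : 0 ≤ s) (hs : s ≤ a + b) (he : e₁ ≤ e₂) (he₂ : e₂ ≤ 0) :
    (1 + a) ^ e₁ * (1 + b) ^ e₂ ≤ (1 + s) ^ e₂ :=
  calc (1 + a) ^ e₁ * (1 + b) ^ e₂ ≤ (1 + a) ^ e₂ * (1 + b) ^ e₂ := by
        gcongr
        · linarith
      _ = ((1 + a) * (1 + b)) ^ e₂ := (mul_rpow (by linarith) (by linarith)).symm
      _ ≤ (1 + s) ^ e₂ := rpow_le_rpow_of_nonpos (by linarith) (by nlinarith) he₂

lemma one_add_rpow_two_mul_le_one_add_rpow_mul_one_add_rpow {a b s e₁ e₂ : ℝ} (ha : 0 ≤ a)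
    (hb : 0 ≤ b) (hs : a + b ≤ 2 * s) (he : e₁ ≤ e₂) (he₁ : e₁ ≤ 0) :
    (1 + s) ^ (2 * e₁) ≤ (1 + a) ^ e₁ * (1 + b) ^ e₂ :=
  calc (1 + s) ^ (2 * e₁) = ((1 + s) ^ 2) ^ e₁ := by
        rw [rpow_mul (by linarith), rpow_two]
      _ ≤ ((1 + a) * (1 + b)) ^ e₁ :=
        rpow_le_rpow_of_nonpos (by positivity) (by nlinarith [sq_nonneg (a - b)]) he₁
      _ = (1 + a) ^ e₁ * (1 + b) ^ e₁ := mul_rpow (by linarith) (by linarith)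
      _ ≤ (1 + a) ^ e₁ * (1 + b) ^ e₂ := by
        gcongr
        · linarith

lemma K₀_pos {m₁ m₂ ν₁ ν₂ : ℝ} (hm₁ : 0 < m₁) (hm₂ : 0 < m₂) (hν₁ : 0 < ν₁) (hν₂ : 0 < ν₂) :
    0 < K₀ m₁ m₂ ν₁ ν₂ := by
  unfold K₀
  have := Beta_pos (half_pos hm₁) (half_pos hν₁)
  have := Beta_pos (half_pos hm₂) (half_pos hν₂)
  positivity

lemma measurable_hDens_swap (m₁ m₂ ν : ℝ) :
    Measurable fun p : ℝ × ℝ => hDens m₁ m₂ ν p.2 p.1 := by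
  unfold hDens
  fun_prop

section Density

variable {m₁ m₂ ν u t : ℝ}

lemma hDens_eq_mul :
    hDens m₁ m₂ ν u t = K₀ m₁ m₂ ν ν * (t ^ (m₁ / 2 - 1) * (1 - t) ^ (m₂ / 2 - 1)) *
      u ^ ((m₁ + m₂) / 2 - 1) *
      ((1 + m₁ * u * t / ν) ^ (-(m₁ + ν) / 2) * (1 + m₂ * u * (1 - t) / ν) ^ (-(m₂ + ν) / 2)) := by
  rw [hDens]
  ring

-- The exponents in the two bounds below are written as `-(c + d)`, the form in which
-- `integral_Ioi_rpow_mul_one_add_mul_rpow` evaluates the `u`-integral.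
lemma hDens_le (hm₂ : 0 < m₂) (hm : m₂ ≤ m₁) (hν : 0 < ν) (hu : 0 ≤ u) (ht : t ∈ Icc 0 1) :
    hDens m₁ m₂ ν u t ≤ K₀ m₁ m₂ ν ν * (t ^ (m₁ / 2 - 1) * (1 - t) ^ (m₂ / 2 - 1)) *
      (u ^ ((m₁ + m₂) / 2 - 1) * (1 + m₂ / ν * u) ^ (-((m₁ + m₂) / 2 + (ν - m₁) / 2))) := by
  obtain ⟨ht₀, ht₁⟩ := ht
  have ht₁ : 0 ≤ 1 - t := sub_nonneg.2 ht₁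
  have hm₁ := hm₂.trans_le hm
  have hK := K₀_pos hm₁ hm₂ hν hν
  rw [hDens_eq_mul, mul_assoc (K₀ m₁ m₂ ν ν * _),
    show -((m₁ + m₂) / 2 + (ν - m₁) / 2) = -(m₂ + ν) / 2 by ring]
  refine mul_le_mul_of_nonneg_left (mul_le_mul_of_nonneg_left ?_ (by positivity)) (by positivity)
  refine one_add_rpow_mul_one_add_rpow_le (by positivity) (by positivity) (by positivity) ?_
    (by linarith) (by linarith)
  rw [div_mul_eq_mul_div, ← add_div]
  gcongr
  nlinarith [mul_nonneg (mul_nonneg hu ht₀) (sub_nonneg.2 hm)]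

lemma le_hDens (hm₂ : 0 < m₂) (hm : m₂ ≤ m₁) (hν : 0 < ν) (hu : 0 ≤ u) (ht : t ∈ Icc 0 1) :
    K₀ m₁ m₂ ν ν * (t ^ (m₁ / 2 - 1) * (1 - t) ^ (m₂ / 2 - 1)) *
      (u ^ ((m₁ + m₂) / 2 - 1) *
        (1 + m₁ / (2 * ν) * u) ^ (-((m₁ + m₂) / 2 + (m₁ - m₂ + 2 * ν) / 2))) ≤
      hDens m₁ m₂ ν u t := by
  obtain ⟨ht₀, ht₁⟩ := ht
  have ht₁ : 0 ≤ 1 - t := sub_nonneg.2 ht₁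
  have hm₁ := hm₂.trans_le hm
  have hK := K₀_pos hm₁ hm₂ hν hν
  rw [hDens_eq_mul, mul_assoc (K₀ m₁ m₂ ν ν * _),
    show -((m₁ + m₂) / 2 + (m₁ - m₂ + 2 * ν) / 2) = 2 * (-(m₁ + ν) / 2) by ring]
  refine mul_le_mul_of_nonneg_left (mul_le_mul_of_nonneg_left ?_ (by positivity)) (by positivity)
  refine one_add_rpow_two_mul_le_one_add_rpow_mul_one_add_rpow (by positivity) (by positivity) ?_
    (by linarith) (by linarith)
  rw [← add_div, show 2 * (m₁ / (2 * ν) * u) = m₁ * u / ν by field_simp]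
  gcongr
  nlinarith [mul_nonneg (mul_nonneg hu ht₁) (sub_nonneg.2 hm)]

end Density

lemma Beta_mul_regIncBeta {m₂ w : ℝ} (hm₂ : 0 < m₂) (hw : 0 ≤ w) :
    Beta ((m₂ + 1 / 2) / 2) (m₂ / 2) * regIncBeta m₂ w =
      ∫ t in Ioc 0 w, t ^ ((m₂ + 1 / 2) / 2 - 1) * (1 - t) ^ (m₂ / 2 - 1) := by
  rw [regIncBeta, intervalIntegral.integral_of_le hw, ← mul_assoc,
    mul_one_div_cancel (Beta_pos (by positivity) (half_pos hm₂)).ne', one_mul]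

section Constants

variable {m₁ m₂ ν : ℝ}

lemma A₁_eq_K₀_mul (hm₁ : 0 < m₁) (hm₂ : 0 < m₂) (hν : 0 < ν) :
    A₁ m₁ m₂ ν ν = K₀ m₁ m₂ ν ν *
      ((m₂ / ν) ^ (-((m₁ + m₂) / 2)) * Beta ((m₁ + m₂) / 2) ((ν - m₁) / 2)) *
        Beta (m₁ / 2) (m₂ / 2) := by
  have hx : 0 < m₁ / ν := div_pos hm₁ hν
  have hy : 0 < m₂ / ν := div_pos hm₂ hν
  have h_pow : (m₂ / ν) ^ (-((m₁ + m₂) / 2)) = ((m₂ / ν) ^ (m₁ / 2) * (m₂ / ν) ^ (m₂ / 2))⁻¹ := by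
    rw [← rpow_add hy, ← rpow_neg hy.le]
    ring_nf
  rw [A₁, K₀, show m₁ * ν / (m₂ * ν) = (m₁ / ν) / (m₂ / ν) by field_simp,
    div_rpow hx.le hy.le, h_pow]
  have := rpow_pos_of_pos hy (m₁ / 2)
  have := rpow_pos_of_pos hy (m₂ / 2)
  field_simp

lemma A₂_eq_K₀_mul (hm₁ : 0 < m₁) (hm₂ : 0 < m₂) (hν : 0 < ν) :
    A₂ m₁ m₂ ν ν = K₀ m₁ m₂ ν ν *
      ((m₁ / (2 * ν)) ^ (-((m₁ + m₂) / 2)) * Beta ((m₁ + m₂) / 2) ((m₁ - m₂ + 2 * ν) / 2)) *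
        Beta (m₁ / 2) (m₂ / 2) := by
  have hx : 0 < m₁ / ν := div_pos hm₁ hν
  have hy : 0 < m₂ / ν := div_pos hm₂ hν
  have h_pow : (m₁ / (2 * ν)) ^ (-((m₁ + m₂) / 2)) =
      2 ^ ((m₁ + m₂) / 2) * ((m₁ / ν) ^ (m₁ / 2) * (m₁ / ν) ^ (m₂ / 2))⁻¹ := by
    rw [show m₁ / (2 * ν) = (m₁ / ν) / 2 by ring, div_rpow hx.le zero_le_two, rpow_neg hx.le,
      rpow_neg zero_le_two, ← rpow_add hx, add_div, div_inv_eq_mul, mul_comm]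
  rw [A₂, K₀, show m₂ * ν / (m₁ * ν) = (m₂ / ν) / (m₁ / ν) by field_simp,
    div_rpow hy.le hx.le, h_pow]
  have := rpow_pos_of_pos hx (m₁ / 2)
  have := rpow_pos_of_pos hx (m₂ / 2)
  field_simp

end Constants

/-- With `m₁ = m₂ + 1/2` and `ν₁ = ν₂ = ν`, the limiting CDF
`Λ(w) = ∫₀^w ∫₀^∞ h(u,t) du dt` is bracketed by multiples of the regularized
incomplete Beta function with shape parameters `(m₂+0.5)/2` and `m₂/2`. -/
theorem limiting_cdf_beta_bounds (m₂ ν : ℝ) (hm₂ : 0 < m₂) (hν : m₂ + 1 / 2 < ν)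
    (w : ℝ) (hw0 : 0 < w) (hw1 : w < 1) :
    A₂ (m₂ + 1 / 2) m₂ ν ν * regIncBeta m₂ w ≤
        (∫ t in (0 : ℝ)..w, ∫ u in Ioi (0 : ℝ), hDens (m₂ + 1 / 2) m₂ ν u t) ∧
      (∫ t in (0 : ℝ)..w, ∫ u in Ioi (0 : ℝ), hDens (m₂ + 1 / 2) m₂ ν u t) ≤
        A₁ (m₂ + 1 / 2) m₂ ν ν * regIncBeta m₂ w := by
  have hm₁ : 0 < m₂ + 1 / 2 := by positivity
  have hm : m₂ ≤ m₂ + 1 / 2 := by linarith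
  have hν₀ : 0 < ν := by linarith
  have hc : 0 < (m₂ + 1 / 2 + m₂) / 2 := by positivity
  have hD : IntegrableOn
      (fun t => K₀ (m₂ + 1 / 2) m₂ ν ν * (t ^ ((m₂ + 1 / 2) / 2 - 1) * (1 - t) ^ (m₂ / 2 - 1)))
      (Ioc 0 w) :=
    ((integrableOn_rpow_mul_one_sub_rpow (half_pos hm₁) (half_pos hm₂)).mono_set
      (Ioc_subset_Ioc_right hw1.le)).const_mul _
  have hΛ := setIntegral_setIntegral_mem_Icc_of_forall_mem_Icc
    (f := fun t u => hDens (m₂ + 1 / 2) m₂ ν u t) measurableSet_Ioc measurableSet_Ioi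
    (measurable_hDens_swap (m₂ + 1 / 2) m₂ ν).stronglyMeasurable hD
    (integrableOn_Ioi_rpow_mul_one_add_mul_rpow hc (by linarith) (by positivity))
    (integrableOn_Ioi_rpow_mul_one_add_mul_rpow hc (by linarith) (div_pos hm₂ hν₀))
    fun t ht u hu => have ht : t ∈ Icc 0 1 := ⟨ht.1.le, ht.2.trans hw1.le⟩
      ⟨le_hDens hm₂ hm hν₀ (le_of_lt hu) ht, hDens_le hm₂ hm hν₀ (le_of_lt hu) ht⟩
  rw [integral_Ioi_rpow_mul_one_add_mul_rpow hc (by linarith) (by positivity),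
    integral_Ioi_rpow_mul_one_add_mul_rpow hc (by linarith) (div_pos hm₂ hν₀),
    integral_const_mul, ← Beta_mul_regIncBeta hm₂ hw0.le] at hΛ
  rw [intervalIntegral.integral_of_le hw0.le, A₁_eq_K₀_mul hm₁ hm₂ hν₀, A₂_eq_K₀_mul hm₁ hm₂ hν₀]
  exact ⟨le_of_eq_of_le (by ring) hΛ.1, hΛ.2.trans_eq (by ring)⟩
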